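/- Let H be a separable complex Hilbert space and (T(t))_{t≥0} a C₀-semigroup of self-adjoint contractions on H which is stable but not exponentially stable. Let α, β : [0,∞) → (0,∞) be functions such that α(t) → ∞ as t → ∞ and, for every ε > 0, β(t)e^{-tε} → 0 as t → ∞. Then the set G(α,β) = {x ∈ H : limsup_{t→∞} α(t)‖T(t)x‖ = ∞ and liminf_{t→∞} β(t)‖T(t)x‖ = 0} is a dense G_δ subset of H. -/

import Mathlib

open Filter Topology

/-- `T` is a C₀-semigroup of self-adjoint contractions on the complex Hilbert
space `H`. -/
def IsSelfAdjointContractionC0Semigroup {H : Type*} [NormedAddCommGroup H]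
    [InnerProductSpace ℂ H] [CompleteSpace H] (T : ℝ → H →L[ℂ] H) : Prop :=
  T 0 = 1 ∧
  (∀ s t : ℝ, 0 ≤ s → 0 ≤ t → T (s + t) = T s ∘L T t) ∧
  (∀ t : ℝ, 0 ≤ t → IsSelfAdjoint (T t)) ∧
  (∀ t : ℝ, 0 ≤ t → ‖T t‖ ≤ 1) ∧
  (∀ x : H, ContinuousOn (fun t : ℝ => T t x) (Set.Ici 0))

/-- `T` is exponentially stable. -/
def IsExpStable {H : Type*} [NormedAddCommGroup H] [InnerProductSpace ℂ H]
    (T : ℝ → H →L[ℂ] H) : Prop :=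
  ∃ C > (0 : ℝ), ∃ a > (0 : ℝ), ∀ t : ℝ, 0 ≤ t → ‖T t‖ ≤ C * Real.exp (-(t * a))

/-- `T` is (strongly) stable: every orbit tends to `0`. -/
def IsStable {H : Type*} [NormedAddCommGroup H] [InnerProductSpace ℂ H]
    (T : ℝ → H →L[ℂ] H) : Prop :=
  ∀ x : H, Tendsto (fun t : ℝ => ‖T t x‖) atTop (𝓝 0)

section AuxDev
variable {H : Type*} [NormedAddCommGroup H] [InnerProductSpace ℂ H] [CompleteSpace H]

private lemma auxT_pow (T : ℝ → H →L[ℂ] H) (hT0 : T 0 = 1)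
    (hadd : ∀ s t : ℝ, 0 ≤ s → 0 ≤ t → T (s + t) = T s ∘L T t) :
    ∀ n : ℕ, T (n : ℝ) = (T 1) ^ n := by
  intro n
  induction n with
  | zero => simpa using hT0
  | succ n ih =>
    have h : T ((n : ℝ) + 1) = T (n : ℝ) ∘L T 1 := hadd _ 1 (Nat.cast_nonneg n) zero_le_one
    push_cast
    rw [h, ih, pow_succ]
    rfl

private lemma auxT_norm_one (T : ℝ → H →L[ℂ] H) (hT0 : T 0 = 1)
    (hadd : ∀ s t : ℝ, 0 ≤ s → 0 ≤ t → T (s + t) = T s ∘L T t)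
    (hcontr : ∀ t : ℝ, 0 ≤ t → ‖T t‖ ≤ 1)
    (hnexp : ¬ IsExpStable T) :
    ∀ t : ℝ, 0 ≤ t → ‖T t‖ = 1 := by
  by_contra hc
  push_neg at hc
  obtain ⟨t₀, ht₀, hne⟩ := hc
  have hq1 : ‖T t₀‖ < 1 := lt_of_le_of_ne (hcontr t₀ ht₀) hne
  apply hnexp
  rcases eq_or_lt_of_le ht₀ with h0 | hpos
  · -- t₀ = 0 : then H is trivial
    have hsub : ∀ x : H, x = 0 := by
      intro x
      have hTx : (T t₀) x = x := by rw [← h0, hT0]; rfl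
      have h1 : ‖x‖ ≤ ‖T t₀‖ * ‖x‖ := by
        conv_lhs => rw [← hTx]
        exact (T t₀).le_opNorm x
      have hn : ‖x‖ ≤ 0 := by nlinarith [norm_nonneg x]
      exact norm_le_zero_iff.mp hn
    refine ⟨1, one_pos, 1, one_pos, fun t ht => ?_⟩
    refine (T t).opNorm_le_bound (by positivity) (fun x => ?_)
    rw [hsub x, map_zero]; simp
  · set q := max ‖T t₀‖ (1/2) with hq
    have hq0 : (0:ℝ) < q := lt_of_lt_of_le (by norm_num) (le_max_right _ _)
    have hqhalf : (1/2 : ℝ) ≤ q := le_max_right _ _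
    have hqlt : q < 1 := max_lt hq1 (by norm_num)
    have key : ∀ n : ℕ, ∀ t : ℝ, (n : ℝ) * t₀ ≤ t → ‖T t‖ ≤ q ^ n := by
      intro n
      induction n with
      | zero =>
        intro t ht
        simpa using hcontr t (by simpa using ht)
      | succ n ih =>
        intro t ht
        push_cast at ht
        have hnt : (0:ℝ) ≤ (n:ℝ) * t₀ := by positivity
        have htt : 0 ≤ t - t₀ := by nlinarith
        have h2 : (n : ℝ) * t₀ ≤ t - t₀ := by nlinarith
        have hs : T t = T t₀ ∘L T (t - t₀) := by
          have h := hadd t₀ (t - t₀) hpos.le htt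
          have heq : t₀ + (t - t₀) = t := by ring
          rwa [heq] at h
        calc ‖T t‖ ≤ ‖T t₀‖ * ‖T (t - t₀)‖ := by rw [hs]; exact (T t₀).opNorm_comp_le _
        _ ≤ q * q ^ n :=
          mul_le_mul (le_max_left _ _) (ih _ h2) (norm_nonneg _) hq0.le
        _ = q ^ (n + 1) := by ring
    set L := Real.log q with hLdef
    have hL : L < 0 := Real.log_neg hq0 hqlt
    refine ⟨2, by norm_num, -L / t₀, div_pos (neg_pos.2 hL) hpos, fun t ht => ?_⟩
    set n := ⌊t / t₀⌋₊ with hndef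
    have hn1 : (n : ℝ) * t₀ ≤ t := by
      have h := Nat.floor_le (div_nonneg ht hpos.le)
      calc (n : ℝ) * t₀ ≤ (t / t₀) * t₀ := mul_le_mul_of_nonneg_right h hpos.le
      _ = t := by field_simp
    have hn2 : t / t₀ < (n : ℝ) + 1 := Nat.lt_floor_add_one _
    have hqn : ‖T t‖ ≤ q ^ n := key n t hn1
    have hq_exp : q ^ n = Real.exp ((n : ℝ) * L) := by
      rw [Real.exp_nat_mul, Real.exp_log hq0]
    have hmono : (n : ℝ) * L ≤ (t / t₀) * L - L := by nlinarith
    have hfin : Real.exp ((t / t₀) * L - L) ≤ 2 * Real.exp (-(t * (-L / t₀))) := by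
      have h2 : -(t * (-L / t₀)) = (t / t₀) * L := by field_simp
      rw [h2, Real.exp_sub]
      have hexpL : Real.exp L = q := Real.exp_log hq0
      rw [hexpL]
      rw [div_le_iff₀ hq0] at *
      have := Real.exp_pos ((t / t₀) * L)
      nlinarith
    calc ‖T t‖ ≤ Real.exp ((n : ℝ) * L) := hq_exp ▸ hqn
    _ ≤ Real.exp ((t / t₀) * L - L) := Real.exp_le_exp.2 hmono
    _ ≤ 2 * Real.exp (-(t * (-L / t₀))) := hfin



set_option maxHeartbeats 1000000 in
open scoped InnerProductSpace in
private lemma aux_inner_le {A B : H →L[ℂ] H} (hA : IsSelfAdjoint A) (hB : IsSelfAdjoint B)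
    (h : A * A ≤ B * B) (x : H) : ‖A x‖ ≤ ‖B x‖ := by
  have key : ∀ C : H →L[ℂ] H, IsSelfAdjoint C → RCLike.re ⟪(C * C) x, x⟫_ℂ = ‖C x‖ ^ 2 := by
    intro C hC
    have hadj := ContinuousLinearMap.adjoint_inner_left C (C x) x
    rw [ContinuousLinearMap.isSelfAdjoint_iff'.mp hC] at hadj
    rw [ContinuousLinearMap.mul_apply, ← inner_conj_symm, ← hadj, inner_conj_symm]
    exact inner_self_eq_norm_sq (𝕜 := ℂ) (C x)
  have h1 : RCLike.re ⟪(A * A) x, x⟫_ℂ = ‖A x‖ ^ 2 := key A hA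
  have h2 : RCLike.re ⟪(B * B) x, x⟫_ℂ = ‖B x‖ ^ 2 := key B hB
  have hpos := ((ContinuousLinearMap.le_def (A * A) (B * B)).mp h).inner_nonneg_left x
  rw [ContinuousLinearMap.sub_apply, inner_sub_left] at hpos
  replace hpos := (RCLike.nonneg_iff.mp hpos).1
  rw [map_sub] at hpos
  have hsq : ‖A x‖ ^ 2 ≤ ‖B x‖ ^ 2 := by rw [← h1, ← h2]; linarith
  have := Real.sqrt_le_sqrt hsq
  rwa [Real.sqrt_sq (norm_nonneg _), Real.sqrt_sq (norm_nonneg _)] at this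

set_option maxHeartbeats 1000000 in
private lemma aux_decay [Nontrivial H] (T : ℝ → H →L[ℂ] H) (hT0 : T 0 = 1)
    (hadd : ∀ s t : ℝ, 0 ≤ s → 0 ≤ t → T (s + t) = T s ∘L T t)
    (hsa : ∀ t : ℝ, 0 ≤ t → IsSelfAdjoint (T t))
    (hcontr : ∀ t : ℝ, 0 ≤ t → ‖T t‖ ≤ 1)
    (hstab : IsStable T)
    (x : H) (ε : ℝ) (hε : 0 < ε) :
    ∃ y : H, ‖y - x‖ < ε ∧ ∃ q : ℝ, 0 < q ∧ q < 1 ∧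
      ∀ m : ℕ, ‖T (m : ℝ) y‖ ≤ ‖x‖ * q ^ m := by
  set S := T 1 with hSdef
  have hSsa : IsSelfAdjoint S := hsa 1 zero_le_one
  have hS1 : ‖S‖ ≤ 1 := hcontr 1 zero_le_one
  have hSpos : (0 : H →L[ℂ] H) ≤ S := by
    have h : T ((1:ℝ)/2 + 1/2) = T (1/2) ∘L T (1/2) := hadd _ _ (by norm_num) (by norm_num)
    have hhalf : IsSelfAdjoint (T ((1:ℝ)/2)) := hsa _ (by norm_num)
    have h'' : S = T ((1:ℝ)/2) ∘L T (1/2) := by rw [hSdef, ← h]; norm_num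
    have h' : S = star (T ((1:ℝ)/2)) * T (1/2) := by rw [hhalf.star_eq]; exact h''
    rw [h']
    exact star_mul_self_nonneg _
  have hspec : ∀ l ∈ spectrum ℝ S, 0 ≤ l ∧ l ≤ 1 := by
    intro l hl
    refine ⟨spectrum_nonneg_of_nonneg hSpos hl, ?_⟩
    have := spectrum.norm_le_norm_of_mem hl
    rw [Real.norm_eq_abs] at this
    calc l ≤ |l| := le_abs_self l
    _ ≤ 1 := this.trans hS1
  -- stability along naturals
  have hnat : Tendsto (fun m : ℕ => ‖(S ^ m) x‖) atTop (𝓝 0) := by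
    have h1 : Tendsto (fun m : ℕ => ‖T (m : ℝ) x‖) atTop (𝓝 0) :=
      (hstab x).comp tendsto_natCast_atTop_atTop
    convert h1 using 2 with m
    rw [auxT_pow T hT0 hadd m]
  obtain ⟨n₀, hn₀⟩ : ∃ n₀ : ℕ, ‖(S ^ n₀) x‖ < ε / 2 :=
    ((hnat.eventually (eventually_lt_nhds (by positivity : (0:ℝ) < ε / 2))).exists)
  set δ : ℝ := 1 / (8 * ((n₀ : ℝ) + 1)) with hδdef
  have hδ0 : 0 < δ := by positivity
  have hδmul : δ * (8 * ((n₀ : ℝ) + 1)) = 1 := by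
    rw [hδdef]; field_simp
  have hn₀0 : (0:ℝ) ≤ (n₀ : ℝ) := Nat.cast_nonneg n₀
  have hδn : 0 ≤ δ * (n₀ : ℝ) := mul_nonneg hδ0.le hn₀0
  have hδ8 : δ ≤ 1 / 8 := by nlinarith
  have hδhalf : 2 * δ < 1 := by linarith
  have h12δ : (0:ℝ) < 1 - 2 * δ := by linarith
  -- Bernoulli bound
  have hbern : (1/2 : ℝ) ≤ (1 - 2 * δ) ^ n₀ := by
    have h := one_add_mul_le_pow (a := -(2*δ)) (by linarith) n₀
    have hn : (n₀ : ℝ) * (2 * δ) ≤ 1 / 4 := by nlinarith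
    calc (1/2 : ℝ) ≤ 1 + (n₀ : ℝ) * -(2*δ) := by nlinarith
    _ ≤ (1 + -(2*δ)) ^ n₀ := h
    _ = (1 - 2*δ) ^ n₀ := by ring_nf
  set c : ℝ := ((1 - 2*δ)⁻¹) ^ n₀ with hcdef
  have hc0 : 0 < c := by positivity
  have hc2 : c ≤ 2 := by
    have h2 : (2:ℝ)⁻¹ ≤ (1 - 2*δ) ^ n₀ := by rw [← one_div]; exact hbern
    rw [hcdef, inv_pow]
    exact (inv_le_comm₀ (by positivity) (by norm_num)).mpr h2
  -- the cut-off functions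
  set g : ℝ → ℝ := fun l => min 1 (max 0 ((l - (1 - 2*δ)) / δ)) with hgdef
  set f : ℝ → ℝ := fun l => 1 - g l with hfdef
  have hg_cont : Continuous g := by
    apply Continuous.min continuous_const
    apply Continuous.max continuous_const
    fun_prop
  have hf_cont : Continuous f := continuous_const.sub hg_cont
  have hg0 : ∀ l, 0 ≤ g l := fun l => le_min zero_le_one (le_max_left _ _)
  have hg1 : ∀ l, g l ≤ 1 := fun l => min_le_left _ _
  have hgeq0 : ∀ l, l ≤ 1 - 2*δ → g l = 0 := by
    intro l hl
    rw [hgdef]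
    simp only
    rw [max_eq_left (div_nonpos_of_nonpos_of_nonneg (by linarith) hδ0.le), min_eq_right zero_le_one]
  have hgeq1 : ∀ l, 1 - δ ≤ l → g l = 1 := by
    intro l hl
    rw [hgdef]
    simp only
    have h1 : (1:ℝ) ≤ (l - (1 - 2*δ)) / δ := by
      rw [le_div_iff₀ hδ0]; linarith
    rw [max_eq_right (by linarith), min_eq_left h1]
  set y : H := cfc f S x with hydef
  -- x - y = cfc g S x
  have hfg : cfc f S = 1 - cfc g S := by
    have h1 : cfc f S = cfc (fun l => (fun _ : ℝ => (1:ℝ)) l - g l) S := rfl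
    rw [h1, cfc_sub (fun _ : ℝ => (1:ℝ)) g S continuousOn_const hg_cont.continuousOn]
    congr 1
    exact cfc_one ℝ S hSsa
  have hxy : x - y = cfc g S x := by
    rw [hydef, hfg]
    simp [ContinuousLinearMap.sub_apply]
  -- the norm estimate ‖cfc g S x‖ ≤ c * ‖S ^ n₀ x‖
  set gc : ℝ → ℝ := fun l => c * l ^ n₀ with hgcdef
  have hgc_cont : Continuous gc := by fun_prop
  have hmul : cfc g S * cfc g S ≤ cfc gc S * cfc gc S := by
    rw [← cfc_mul g g S hg_cont.continuousOn hg_cont.continuousOn,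
      ← cfc_mul gc gc S hgc_cont.continuousOn hgc_cont.continuousOn]
    apply cfc_mono (fun l hl => ?_) (hg_cont.mul hg_cont).continuousOn
      (hgc_cont.mul hgc_cont).continuousOn
    obtain ⟨hl0, hl1⟩ := hspec l hl
    have hgc0 : 0 ≤ gc l := by rw [hgcdef]; positivity
    simp only [Pi.mul_apply]
    rcases le_or_gt l (1 - 2*δ) with hll | hll
    · rw [hgeq0 l hll]
      simpa using mul_nonneg hgc0 hgc0
    · have hinv : (1 - 2*δ)⁻¹ * (1 - 2*δ) = 1 := inv_mul_cancel₀ (ne_of_gt h12δ)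
      have hstep : (1:ℝ) ≤ (1 - 2*δ)⁻¹ * l := by
        have h3 := mul_le_mul_of_nonneg_left hll.le (le_of_lt (inv_pos.2 h12δ))
        linarith
      have h1 : (1:ℝ) ≤ gc l := by
        rw [hgcdef]
        simp only
        rw [hcdef, ← mul_pow]
        calc (1:ℝ) = 1 ^ n₀ := (one_pow _).symm
        _ ≤ ((1 - 2*δ)⁻¹ * l) ^ n₀ := pow_le_pow_left₀ zero_le_one hstep n₀
      nlinarith [hg0 l, hg1 l]
  have hgbound : ‖cfc g S x‖ ≤ c * ‖(S ^ n₀) x‖ := by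
    have h := aux_inner_le (cfc_predicate g S) (cfc_predicate gc S) hmul x
    have hgc_eq : cfc gc S = c • S ^ n₀ := by
      rw [hgcdef]
      rw [cfc_const_mul c (fun l : ℝ => l ^ n₀) S (by fun_prop)]
      congr 1
      exact cfc_pow_id S n₀ hSsa
    rw [hgc_eq] at h
    rwa [ContinuousLinearMap.smul_apply, norm_smul, Real.norm_eq_abs,
      abs_of_pos hc0] at h
  -- conclusion part 1 : ‖y - x‖ < ε
  have hclose : ‖y - x‖ < ε := by
    rw [norm_sub_rev, hxy]
    calc ‖cfc g S x‖ ≤ c * ‖(S ^ n₀) x‖ := hgbound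
    _ ≤ 2 * ‖(S ^ n₀) x‖ := mul_le_mul_of_nonneg_right hc2 (norm_nonneg _)
    _ < 2 * (ε / 2) := by
        apply mul_lt_mul_of_pos_left hn₀ (by norm_num)
    _ = ε := by ring
  -- conclusion part 2 : decay
  refine ⟨y, hclose, 1 - δ, by linarith, by linarith, fun m => ?_⟩
  have h1 : S ^ m * cfc f S = cfc (fun l => l ^ m * f l) S := by
    rw [cfc_mul (fun l : ℝ => l ^ m) f S (by fun_prop) hf_cont.continuousOn,
      cfc_pow_id S m hSsa]
  have h2 : ‖cfc (fun l => l ^ m * f l) S‖ ≤ (1 - δ) ^ m := by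
    apply norm_cfc_le (pow_nonneg (by linarith) m)
    intro l hl
    obtain ⟨hl0, hl1⟩ := hspec l hl
    have hf0 : 0 ≤ f l := by rw [hfdef]; simp only; linarith [hg1 l]
    have hf1 : f l ≤ 1 := by rw [hfdef]; simp only; linarith [hg0 l]
    rw [Real.norm_eq_abs, abs_of_nonneg (mul_nonneg (pow_nonneg hl0 m) hf0)]
    rcases le_or_gt l (1 - δ) with hll | hll
    · calc l ^ m * f l ≤ l ^ m * 1 := mul_le_mul_of_nonneg_left hf1 (pow_nonneg hl0 m)
      _ = l ^ m := mul_one _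
      _ ≤ (1 - δ) ^ m := pow_le_pow_left₀ hl0 hll m
    · have hfl : f l = 0 := by rw [hfdef]; simp only; rw [hgeq1 l hll.le]; ring
      rw [hfl, mul_zero]
      exact pow_nonneg (by linarith) m
  calc ‖T (m : ℝ) y‖ = ‖(S ^ m * cfc f S) x‖ := by
        rw [auxT_pow T hT0 hadd m, hydef]; rfl
  _ ≤ ‖S ^ m * cfc f S‖ * ‖x‖ := ContinuousLinearMap.le_opNorm _ _
  _ ≤ (1 - δ) ^ m * ‖x‖ := by
      apply mul_le_mul_of_nonneg_right _ (norm_nonneg x)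
      rw [h1]; exact h2
  _ = ‖x‖ * (1 - δ) ^ m := mul_comm _ _


private lemma aux_tendsto (T : ℝ → H →L[ℂ] H)
    (hadd : ∀ s t : ℝ, 0 ≤ s → 0 ≤ t → T (s + t) = T s ∘L T t)
    (hcontr : ∀ t : ℝ, 0 ≤ t → ‖T t‖ ≤ 1)
    (β : ℝ → ℝ) (hβ_pos : ∀ t : ℝ, 0 ≤ t → 0 < β t)
    (hβ : ∀ ε > (0 : ℝ), Tendsto (fun t : ℝ => β t * Real.exp (-(t * ε))) atTop (𝓝 0))
    (y : H) (C q : ℝ) (hC : 0 ≤ C) (hq0 : 0 < q) (hq1 : q < 1)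
    (hdec : ∀ m : ℕ, ‖T (m : ℝ) y‖ ≤ C * q ^ m) :
    Tendsto (fun t : ℝ => β t * ‖T t y‖) atTop (𝓝 0) := by
  have hL : Real.log q < 0 := Real.log_neg hq0 hq1
  have key : ∀ t : ℝ, 0 ≤ t → ‖T t y‖ ≤ (C / q) * Real.exp (-(t * (-Real.log q))) := by
    intro t ht
    set m := ⌊t⌋₊ with hmdef
    have hm1 : (m : ℝ) ≤ t := Nat.floor_le ht
    have hm2 : t < (m : ℝ) + 1 := Nat.lt_floor_add_one t
    have hsplit : T t = T (t - m) ∘L T (m : ℝ) := by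
      have h := hadd (t - m) (m : ℝ) (by linarith) (Nat.cast_nonneg m)
      have he : t - (m:ℝ) + m = t := by ring
      rwa [he] at h
    have h1 : ‖T t y‖ ≤ ‖T (m : ℝ) y‖ := by
      rw [hsplit]
      calc ‖(T (t - m) ∘L T (m : ℝ)) y‖ = ‖T (t - m) (T (m : ℝ) y)‖ := rfl
      _ ≤ ‖T (t - m)‖ * ‖T (m : ℝ) y‖ := ContinuousLinearMap.le_opNorm _ _
      _ ≤ 1 * ‖T (m : ℝ) y‖ :=
        mul_le_mul_of_nonneg_right (hcontr _ (by linarith)) (norm_nonneg _)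
      _ = ‖T (m : ℝ) y‖ := one_mul _
    have hqm : q ^ m = Real.exp ((m : ℝ) * Real.log q) := by
      rw [Real.exp_nat_mul, Real.exp_log hq0]
    have hle : (m : ℝ) * Real.log q ≤ (t - 1) * Real.log q :=
      mul_le_mul_of_nonpos_right (by linarith) hL.le
    have heq : Real.exp ((t - 1) * Real.log q)
        = (1 / q) * Real.exp (-(t * (-Real.log q))) := by
      have h3 : -(t * (-Real.log q)) = t * Real.log q := by ring
      rw [h3, sub_mul, one_mul, Real.exp_sub, Real.exp_log hq0]
      ring
    have h2 : C * q ^ m ≤ (C / q) * Real.exp (-(t * (-Real.log q))) := by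
      calc C * q ^ m = C * Real.exp ((m : ℝ) * Real.log q) := by rw [hqm]
      _ ≤ C * Real.exp ((t - 1) * Real.log q) :=
        mul_le_mul_of_nonneg_left (Real.exp_le_exp.2 hle) hC
      _ = (C / q) * Real.exp (-(t * (-Real.log q))) := by rw [heq]; ring
    exact h1.trans ((hdec m).trans h2)
  apply squeeze_zero' (g := fun t : ℝ => (C / q) * (β t * Real.exp (-(t * (-Real.log q)))))
  · filter_upwards [eventually_ge_atTop (0:ℝ)] with t ht
    exact mul_nonneg (hβ_pos t ht).le (norm_nonneg _)
  · filter_upwards [eventually_ge_atTop (0:ℝ)] with t ht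
    calc β t * ‖T t y‖ ≤ β t * ((C / q) * Real.exp (-(t * (-Real.log q)))) :=
      mul_le_mul_of_nonneg_left (key t ht) (hβ_pos t ht).le
    _ = (C / q) * (β t * Real.exp (-(t * (-Real.log q)))) := by ring
  · have := (hβ (-Real.log q) (by linarith)).const_mul (C / q)
    simpa using this

end AuxDev

set_option maxHeartbeats 1000000 in
/-- Theorem 1.2 of the paper: let `(T(t))_{t ≥ 0}` be a stable but
not exponentially stable `C₀`-semigroup of self-adjoint contractions on a
separable complex Hilbert space `H`, and let `α, β : [0,∞) → (0,∞)` satisfy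
`α(t) → ∞` and `β(t) e^{-tε} → 0` for every `ε > 0`.  Then the set of all `x ∈ H`
with `limsup_{t → ∞} α(t) ‖T(t)x‖ = ∞` and `liminf_{t → ∞} β(t) ‖T(t)x‖ = 0`
(limits computed in the extended reals) is a dense `G_δ` subset of `H`. -/
theorem slow_fast_decay_dense_Gδ
    {H : Type*} [NormedAddCommGroup H] [InnerProductSpace ℂ H] [CompleteSpace H]
    [TopologicalSpace.SeparableSpace H]
    (T : ℝ → H →L[ℂ] H)
    (hsem : IsSelfAdjointContractionC0Semigroup T)
    (hstab : IsStable T) (hnexp : ¬ IsExpStable T)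
    (α β : ℝ → ℝ)
    (hα_pos : ∀ t : ℝ, 0 ≤ t → 0 < α t) (hβ_pos : ∀ t : ℝ, 0 ≤ t → 0 < β t)
    (hα : Tendsto α atTop atTop)
    (hβ : ∀ ε > (0 : ℝ), Tendsto (fun t : ℝ => β t * Real.exp (-(t * ε))) atTop (𝓝 0)) :
    IsGδ {x : H |
        Filter.limsup (fun t : ℝ => ((α t * ‖T t x‖ : ℝ) : EReal)) atTop = ⊤ ∧
        Filter.liminf (fun t : ℝ => ((β t * ‖T t x‖ : ℝ) : EReal)) atTop = 0} ∧
    Dense {x : H |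
        Filter.limsup (fun t : ℝ => ((α t * ‖T t x‖ : ℝ) : EReal)) atTop = ⊤ ∧
        Filter.liminf (fun t : ℝ => ((β t * ‖T t x‖ : ℝ) : EReal)) atTop = 0} := by
  unfold IsSelfAdjointContractionC0Semigroup at hsem
  obtain ⟨hT0, hadd, hsa, hcontr, hcont⟩ := hsem
  rcases subsingleton_or_nontrivial H with hsub | hnt
  · exact absurd (⟨1, one_pos, 1, one_pos, fun t ht =>
      (T t).opNorm_le_bound (by positivity) (fun x => by
        rw [Subsingleton.elim x 0, map_zero]; simp)⟩ : IsExpStable T) hnexp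
  have hnorm1 : ∀ t : ℝ, 0 ≤ t → ‖T t‖ = 1 := auxT_norm_one T hT0 hadd hcontr hnexp
  -- the two halves of the set
  have hsetEq : {x : H |
        Filter.limsup (fun t : ℝ => ((α t * ‖T t x‖ : ℝ) : EReal)) atTop = ⊤ ∧
        Filter.liminf (fun t : ℝ => ((β t * ‖T t x‖ : ℝ) : EReal)) atTop = 0}
      = {x : H | Filter.limsup (fun t : ℝ => ((α t * ‖T t x‖ : ℝ) : EReal)) atTop = ⊤}
      ∩ {x : H | Filter.liminf (fun t : ℝ => ((β t * ‖T t x‖ : ℝ) : EReal)) atTop = 0} := rfl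
  set A : Set H :=
    {x : H | Filter.limsup (fun t : ℝ => ((α t * ‖T t x‖ : ℝ) : EReal)) atTop = ⊤} with hA
  set B : Set H :=
    {x : H | Filter.liminf (fun t : ℝ => ((β t * ‖T t x‖ : ℝ) : EReal)) atTop = 0} with hB
  set U : ℕ → ℕ → Set H :=
    fun N M => {x | ∃ t : ℝ, (M : ℝ) ≤ t ∧ (N : ℝ) < α t * ‖T t x‖} with hU
  set V : ℕ → ℕ → Set H :=
    fun n M => {x | ∃ t : ℝ, (M : ℝ) ≤ t ∧ β t * ‖T t x‖ < 1 / ((n : ℝ) + 1)} with hV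
  have hUopen : ∀ N M, IsOpen (U N M) := by
    intro N M
    have h : U N M = ⋃ t : ℝ, ⋃ _ : (M:ℝ) ≤ t, {x : H | (N:ℝ) < α t * ‖T t x‖} := by
      ext x; simp [hU, Set.mem_iUnion]
    rw [h]
    exact isOpen_iUnion fun t => isOpen_iUnion fun _ =>
      isOpen_lt continuous_const (continuous_const.mul ((T t).continuous.norm))
  have hVopen : ∀ n M, IsOpen (V n M) := by
    intro n M
    have h : V n M = ⋃ t : ℝ, ⋃ _ : (M:ℝ) ≤ t,
        {x : H | β t * ‖T t x‖ < 1 / ((n:ℝ) + 1)} := by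
      ext x; simp [hV, Set.mem_iUnion]
    rw [h]
    exact isOpen_iUnion fun t => isOpen_iUnion fun _ =>
      isOpen_lt (continuous_const.mul ((T t).continuous.norm)) continuous_const
  have hAeq : A = ⋂ N : ℕ, ⋂ M : ℕ, U N M := by
    ext x
    simp only [hA, hU, Set.mem_setOf_eq, Set.mem_iInter]
    constructor
    · intro hx N M
      have hfreq : ∃ᶠ t in atTop, (N : ℝ) < α t * ‖T t x‖ := by
        by_contra hcon
        rw [not_frequently] at hcon
        have hev : ∀ᶠ t in atTop, ((α t * ‖T t x‖ : ℝ) : EReal) ≤ ((N:ℝ) : EReal) := by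
          filter_upwards [hcon] with t ht
          exact EReal.coe_le_coe_iff.mpr (not_lt.mp ht)
        have hle := limsup_le_of_le (by isBoundedDefault) hev
        rw [hx] at hle
        exact absurd hle (not_le.mpr (EReal.coe_lt_top _))
      exact (frequently_atTop.mp hfreq) (M:ℝ)
    · intro hx
      rw [EReal.eq_top_iff_forall_lt]
      intro r
      obtain ⟨N, hN⟩ := exists_nat_gt r
      have hfreq : ∃ᶠ t in atTop, ((N:ℝ) : EReal) ≤ ((α t * ‖T t x‖ : ℝ) : EReal) := by
        rw [frequently_atTop]
        intro M
        obtain ⟨t, ht1, ht2⟩ := hx N ⌈max 0 M⌉₊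
        refine ⟨t, ?_, EReal.coe_le_coe_iff.mpr ht2.le⟩
        calc M ≤ max 0 M := le_max_right _ _
        _ ≤ (⌈max 0 M⌉₊ : ℝ) := Nat.le_ceil _
        _ ≤ t := ht1
      calc (r : EReal) < ((N:ℝ) : EReal) := EReal.coe_lt_coe_iff.mpr hN
      _ ≤ _ := le_limsup_of_frequently_le' hfreq
  have hBeq : B = ⋂ n : ℕ, ⋂ M : ℕ, V n M := by
    ext x
    simp only [hB, hV, Set.mem_setOf_eq, Set.mem_iInter]
    constructor
    · intro hx n M
      by_contra hcon
      push_neg at hcon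
      have hev : ∀ᶠ t in atTop,
          ((1 / ((n:ℝ)+1) : ℝ) : EReal) ≤ ((β t * ‖T t x‖ : ℝ) : EReal) :=
        eventually_atTop.mpr ⟨(M:ℝ), fun t ht => EReal.coe_le_coe_iff.mpr (hcon t ht)⟩
      have hge := le_liminf_of_le (by isBoundedDefault) hev
      rw [hx] at hge
      rw [← EReal.coe_zero, EReal.coe_le_coe_iff] at hge
      have : (0:ℝ) < 1 / ((n:ℝ)+1) := by positivity
      linarith
    · intro hx
      apply le_antisymm
      · have h1 : ∀ n : ℕ, Filter.liminf
            (fun t : ℝ => ((β t * ‖T t x‖ : ℝ) : EReal)) atTop ≤ ((1 / ((n:ℝ)+1) : ℝ) : EReal) := by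
          intro n
          apply liminf_le_of_frequently_le'
          rw [frequently_atTop]
          intro M
          obtain ⟨t, ht1, ht2⟩ := hx n ⌈max 0 M⌉₊
          refine ⟨t, ?_, EReal.coe_le_coe_iff.mpr ht2.le⟩
          calc M ≤ max 0 M := le_max_right _ _
          _ ≤ (⌈max 0 M⌉₊ : ℝ) := Nat.le_ceil _
          _ ≤ t := ht1
        have h2 : Tendsto (fun n : ℕ => ((1 / ((n:ℝ)+1) : ℝ) : EReal)) atTop (𝓝 (0 : EReal)) := by
          rw [show (0:EReal) = ((0:ℝ):EReal) from rfl]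
          exact EReal.tendsto_coe.mpr tendsto_one_div_add_atTop_nhds_zero_nat
        exact ge_of_tendsto h2 (Eventually.of_forall h1)
      · apply le_liminf_of_le (by isBoundedDefault)
        filter_upwards [eventually_ge_atTop (0:ℝ)] with t ht
        rw [show (0:EReal) = ((0:ℝ):EReal) from rfl, EReal.coe_le_coe_iff]
        exact mul_nonneg (hβ_pos t ht).le (norm_nonneg _)
  -- Gδ
  have hGA : IsGδ A := by
    rw [hAeq]
    exact .iInter fun N => .iInter fun M => (hUopen N M).isGδ
  have hGB : IsGδ B := by
    rw [hBeq]
    exact .iInter fun n => .iInter fun M => (hVopen n M).isGδ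
  -- density of each U N M
  have hUdense : ∀ N M, Dense (U N M) := by
    intro N M
    rw [Metric.dense_iff]
    intro x r hr
    obtain ⟨t, htM, htα⟩ :=
      ((eventually_ge_atTop ((M:ℝ))).and (hα.eventually_ge_atTop (8 * ((N:ℝ)+1) / r))).exists
    have ht0 : (0:ℝ) ≤ t := le_trans (Nat.cast_nonneg M) htM
    have hnorm : ‖T t‖ = 1 := hnorm1 t ht0
    obtain ⟨z, hz⟩ : ∃ z : H, (1/2) * ‖z‖ < ‖T t z‖ := by
      by_contra hcon
      push_neg at hcon
      have h : ‖T t‖ ≤ 1/2 := (T t).opNorm_le_bound (by norm_num) hcon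
      rw [hnorm] at h; norm_num at h
    have hz0 : (0:ℝ) < ‖z‖ := by
      rcases eq_or_lt_of_le (norm_nonneg z) with h | h
      · exfalso
        have hz' : z = 0 := norm_eq_zero.mp h.symm
        rw [hz'] at hz
        simp at hz
      · exact h
    set u : H := ((‖z‖ : ℂ))⁻¹ • z with hu
    have hTu : (1/2 : ℝ) < ‖T t u‖ := by
      have h1 : T t u = ((‖z‖ : ℂ))⁻¹ • T t z := by rw [hu, map_smul]
      have h2 : ‖T t u‖ = ‖z‖⁻¹ * ‖T t z‖ := by
        rw [h1, norm_smul, norm_inv, Complex.norm_real, Real.norm_eq_abs, abs_of_pos hz0]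
      rw [h2]
      have h3 := mul_lt_mul_of_pos_left hz (inv_pos.2 hz0)
      have h4 : ‖z‖⁻¹ * (1/2 * ‖z‖) = 1/2 := by field_simp
      linarith
    set s : ℂ := ((r/2 : ℝ) : ℂ) with hs
    set y₁ : H := x + s • u with hy₁
    set y₂ : H := x - s • u with hy₂
    have hdiff : r * ‖T t u‖ ≤ ‖T t y₁‖ + ‖T t y₂‖ := by
      have h1 : T t y₁ - T t y₂ = (s + s) • T t u := by
        rw [hy₁, hy₂, ← map_sub]
        have : (x + s • u) - (x - s • u) = (s + s) • u := by
          rw [add_smul]; abel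
        rw [this, map_smul]
      have h2 : ‖T t y₁ - T t y₂‖ = r * ‖T t u‖ := by
        rw [h1, norm_smul, hs]
        have : ((r/2 : ℝ) : ℂ) + ((r/2 : ℝ) : ℂ) = ((r:ℝ) : ℂ) := by push_cast; ring
        rw [this, Complex.norm_real, Real.norm_eq_abs, abs_of_pos hr]
      calc r * ‖T t u‖ = ‖T t y₁ - T t y₂‖ := h2.symm
      _ ≤ ‖T t y₁‖ + ‖T t y₂‖ := norm_sub_le _ _
    have hmax : r / 4 < ‖T t y₁‖ ∨ r / 4 < ‖T t y₂‖ := by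
      by_contra hcon
      push_neg at hcon
      have := hdiff
      nlinarith [hTu, hr]
    have hmem : ∀ y : H, r / 4 < ‖T t y‖ → dist y x < r → y ∈ Metric.ball x r ∩ U N M := by
      intro y hy hdist
      refine ⟨Metric.mem_ball.mpr hdist, ⟨t, htM, ?_⟩⟩
      have h6 : (8*((N:ℝ)+1)/r) * (r/4) < (8*((N:ℝ)+1)/r) * ‖T t y‖ :=
        mul_lt_mul_of_pos_left hy (by positivity)
      have h7 : (8*((N:ℝ)+1)/r) * ‖T t y‖ ≤ α t * ‖T t y‖ :=
        mul_le_mul_of_nonneg_right htα (norm_nonneg _)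
      have h8 : (8*((N:ℝ)+1)/r) * (r/4) = 2*((N:ℝ)+1) := by field_simp; ring
      have h9 : (N:ℝ) < 2*((N:ℝ)+1) := by
        have := Nat.cast_nonneg (α := ℝ) N; linarith
      linarith
    have hnormsu : ‖s • u‖ = r / 2 := by
      have hu1 : ‖u‖ = 1 := by
        rw [hu, norm_smul, norm_inv, Complex.norm_real, Real.norm_eq_abs, abs_of_pos hz0]
        field_simp
      rw [norm_smul, hu1, mul_one, hs, Complex.norm_real, Real.norm_eq_abs,
        abs_of_pos (by linarith)]
    rcases hmax with h | h
    · exact ⟨y₁, hmem y₁ h (by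
        rw [dist_eq_norm, hy₁, add_sub_cancel_left, hnormsu]; linarith)⟩
    · exact ⟨y₂, hmem y₂ h (by
        rw [dist_eq_norm, hy₂, sub_sub_cancel_left, norm_neg, hnormsu]; linarith)⟩
  -- density of A
  have hDA : Dense A := by
    rw [hAeq, show (⋂ N : ℕ, ⋂ M : ℕ, U N M) = ⋂ p : ℕ × ℕ, U p.1 p.2 by
      ext x; simp [Set.mem_iInter, Prod.forall]]
    exact dense_iInter_of_isOpen (fun p => hUopen p.1 p.2) (fun p => hUdense p.1 p.2)
  -- density of B
  have hDB : Dense B := by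
    rw [Metric.dense_iff]
    intro x r hr
    obtain ⟨y, hy_close, q, hq0, hq1, hdec⟩ :=
      aux_decay T hT0 hadd hsa hcontr hstab x r hr
    refine ⟨y, Metric.mem_ball.mpr (by rw [dist_eq_norm]; exact hy_close), ?_⟩
    have h1 := aux_tendsto T hadd hcontr β hβ_pos hβ y ‖x‖ q (norm_nonneg x) hq0 hq1 hdec
    have h2 : Tendsto (fun t : ℝ => ((β t * ‖T t y‖ : ℝ) : EReal)) atTop
        (𝓝 ((0:ℝ) : EReal)) := EReal.tendsto_coe.mpr h1
    show Filter.liminf (fun t : ℝ => ((β t * ‖T t y‖ : ℝ) : EReal)) atTop = 0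
    rw [h2.liminf_eq]
    rfl
  rw [hsetEq]
  exact ⟨hGA.inter hGB, Dense.inter_of_Gδ hGA hGB hDA hDB⟩
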